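/- arXiv:1306.5594 — 2 statements merged into one kernel-verified Lean document; each statement's English description precedes it below -/
import Mathlib

section
/- Let (V₁,U,V₂) be a node cutset separation of a graph G = (V,E), let G₁ = G[V₁∪U], G₂ = G[V₂∪U], and let ℒ₁, ℒ₂ be collections of cliques of G₁, G₂ respectively. Then a vector x ∈ ℝ^{V ∪ R_U} lies in STAB(G(U), ℒ₁∪ℒ₂∪ℒ(U)) if and only if its restriction to G₁(U) lies in STAB(G₁(U), ℒ₁∪ℒ(U)) and its restriction to G₂(U) lies in STAB(G₂(U), ℒ₂∪ℒ(U)). -/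
open Finset
open scoped Classical

variable {V : Type*} [Fintype V] [DecidableEq V]

/-- A stable (independent) set. -/
def IsStable {W : Type*} (G : SimpleGraph W) (S : Finset W) : Prop :=
  ∀ a ∈ S, ∀ b ∈ S, ¬ G.Adj a b

/-- The record indices: stable subsets of `U`. -/
def RecT (G : SimpleGraph V) (U : Finset V) : Type _ :=
  {T : Finset V // T ⊆ U ∧ IsStable G T}

noncomputable instance (G : SimpleGraph V) (U : Finset V) : Fintype (RecT G U) := by
  unfold RecT; infer_instance

instance (G : SimpleGraph V) (U : Finset V) : DecidableEq (RecT G U) := by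
  unfold RecT; infer_instance

/-- The record graph `G(U)`: `G` plus a clique of record vertices `r_T`, one for each
stable `T ⊆ U`, with `r_T` adjacent exactly to `U \ T` among original vertices. -/
noncomputable def recordGraph (G : SimpleGraph V) (U : Finset V) :
    SimpleGraph (V ⊕ RecT G U) :=
  SimpleGraph.fromRel (fun x y =>
    match x, y with
    | Sum.inl a, Sum.inl b => G.Adj a b
    | Sum.inl a, Sum.inr T => a ∈ U ∧ a ∉ T.1
    | Sum.inr T, Sum.inl a => a ∈ U ∧ a ∉ T.1
    | Sum.inr _, Sum.inr _ => True)

/-- The collection `ℒ(U)` of cliques of `G(U)`: the record clique together with, for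
each `v ∈ U`, the clique `{v} ∪ {r_T : v ∉ T}`. -/
noncomputable def recordCliques (G : SimpleGraph V) (U : Finset V) :
    Set (Finset (V ⊕ RecT G U)) :=
  {(Finset.univ : Finset (RecT G U)).image Sum.inr} ∪
    {L | ∃ v ∈ U, L = insert (Sum.inl v)
      ((Finset.univ.filter (fun T : RecT G U => v ∉ T.1)).image Sum.inr)}

/-- The stable set polytope. -/
noncomputable def stab {W : Type*} [Fintype W] (G : SimpleGraph W) : Set (W → ℝ) :=
  convexHull ℝ {x | ∃ S : Finset W, IsStable G S ∧
    x = fun w => if w ∈ S then (1 : ℝ) else 0}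

/-- The polytope `STAB(G, ℒ)`: convex hull of the stable sets meeting all cliques
of `ℒ`. -/
noncomputable def stabL {W : Type*} [Fintype W] (G : SimpleGraph W)
    (ℒ : Set (Finset W)) : Set (W → ℝ) :=
  convexHull ℝ {x | ∃ S : Finset W, IsStable G S ∧ (∀ L ∈ ℒ, (S ∩ L).Nonempty) ∧
    x = fun w => if w ∈ S then (1 : ℝ) else 0}


/-- `x` restricted to the vertex subset `W₁` lies in the polytope
`STAB(H[W₁], ℒ)` (convex hull of stable sets of the induced subgraph meeting every
clique of `ℒ`). -/
noncomputable def MemStabOn {W : Type*} [Fintype W] [DecidableEq W]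
    (H : SimpleGraph W) (W₁ : Finset W) (ℒ : Set (Finset W)) (x : W → ℝ) : Prop :=
  (fun w : {w // w ∈ W₁} => x w.1) ∈
    convexHull ℝ {z : {w // w ∈ W₁} → ℝ | ∃ S : Finset W, S ⊆ W₁ ∧ IsStable H S ∧
      (∀ L ∈ ℒ, (S ∩ L).Nonempty) ∧ z = fun w => if w.1 ∈ S then (1 : ℝ) else 0}

/-!
Necessity is restriction: restricting to the vertices of `G₁(U)` is linear, so it maps the
convex hull of the admissible stable sets of `G(U)` into that of `G₁(U)`, because every clique of
`ℒ₁ ∪ ℒ(U)` lies inside `G₁(U)`.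

For sufficiency, a stable set meeting every clique of `ℒ(U)` contains exactly one record `r_T`,
and its trace on `U` is `T`. Both convex combinations representing `x` put the total weight
`x r_T` on the sets with record `T`, so they can be coupled along records. Two sets with the same
record agree on `U ∪ R_U`, and as there are no edges between `V₁` and `V₂` their union is a stable
set of `G(U)` meeting every clique of `ℒ₁ ∪ ℒ₂ ∪ ℒ(U)`; the coupled combination of the unions
is `x`.
-/

theorem mem_convexHull_of_sum_smul_eq {ι E : Type*} [Fintype ι] [AddCommGroup E] [Module ℝ E]
    {s : Set E} {x : E} (w : ι → ℝ) (z : ι → E) (hw₀ : ∀ i, 0 ≤ w i) (hw₁ : ∑ i, w i = 1)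
    (hz : ∀ i, w i ≠ 0 → z i ∈ s) (hx : ∑ i, w i • z i = x) : x ∈ convexHull ℝ s := by
  rw [← hx, ← Finset.sum_filter_of_ne fun i _ h => left_ne_zero_of_smul h]
  rw [← Finset.sum_filter_ne_zero] at hw₁
  exact (convex_convexHull ℝ s).sum_mem (fun i _ => hw₀ i) hw₁
    fun i hi => subset_convexHull ℝ s (hz i (Finset.mem_filter.1 hi).2)

theorem exists_coupling {ι₁ ι₂ κ : Type*} [Fintype ι₁] [Fintype ι₂] [DecidableEq κ]
    (τ₁ : ι₁ → κ) (τ₂ : ι₂ → κ) {μ₁ : ι₁ → ℝ} {μ₂ : ι₂ → ℝ}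
    (hμ₁ : ∀ i, 0 ≤ μ₁ i) (hμ₂ : ∀ j, 0 ≤ μ₂ j)
    (hτ : ∀ k, ∑ i with τ₁ i = k, μ₁ i = ∑ j with τ₂ j = k, μ₂ j) :
    ∃ ν : ι₁ × ι₂ → ℝ, (∀ p, 0 ≤ ν p) ∧ (∀ p, ν p ≠ 0 → τ₁ p.1 = τ₂ p.2) ∧
      (∀ i, ∑ j, ν (i, j) = μ₁ i) ∧ ∀ j, ∑ i, ν (i, j) = μ₂ j := by
  set m : κ → ℝ := fun k => ∑ j with τ₂ j = k, μ₂ j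
  have hm₁ : ∀ i, m (τ₁ i) = 0 → μ₁ i = 0 := fun i h =>
    (Finset.sum_eq_zero_iff_of_nonneg fun i' _ => hμ₁ i').1 ((hτ _).trans h) i (by simp)
  have hm₂ : ∀ j, m (τ₂ j) = 0 → μ₂ j = 0 := fun j h =>
    (Finset.sum_eq_zero_iff_of_nonneg fun j' _ => hμ₂ j').1 h j (by simp)
  refine ⟨fun p => if τ₂ p.2 = τ₁ p.1 then μ₁ p.1 * μ₂ p.2 / m (τ₁ p.1) else 0,
    fun p => ?_, fun p hp => ?_, fun i => ?_, fun j => ?_⟩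
  · dsimp only
    split_ifs
    exacts [div_nonneg (mul_nonneg (hμ₁ _) (hμ₂ _)) (Finset.sum_nonneg fun j _ => hμ₂ j), le_rfl]
  · by_contra h
    exact hp (if_neg (Ne.symm h))
  · dsimp only
    rw [← Finset.sum_filter, ← Finset.sum_div, ← Finset.mul_sum]
    exact mul_div_cancel_of_imp (hm₁ i)
  · dsimp only
    rw [← Finset.sum_filter]
    calc ∑ i with τ₂ j = τ₁ i, μ₁ i * μ₂ j / m (τ₁ i)
        = (∑ i with τ₁ i = τ₂ j, μ₁ i) * μ₂ j / m (τ₂ j) := by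
          rw [Finset.sum_mul, Finset.sum_div]
          refine Finset.sum_congr (by simp [eq_comm]) fun i hi => ?_
          rw [(Finset.mem_filter.1 hi).2]
      _ = μ₂ j := by rw [hτ]; exact mul_div_cancel_left_of_imp (hm₂ j)

theorem sum_mul_fst_of_sum_snd_eq {ι₁ ι₂ : Type*} [Fintype ι₁] [Fintype ι₂]
    {ν : ι₁ × ι₂ → ℝ} {μ : ι₁ → ℝ} (hν : ∀ i, ∑ j, ν (i, j) = μ i) (f : ι₁ → ℝ) :
    ∑ p, ν p * f p.1 = ∑ i, μ i * f i := by
  simp only [Fintype.sum_prod_type, ← Finset.sum_mul, hν]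

theorem sum_mul_snd_of_sum_fst_eq {ι₁ ι₂ : Type*} [Fintype ι₁] [Fintype ι₂]
    {ν : ι₁ × ι₂ → ℝ} {μ : ι₂ → ℝ} (hν : ∀ j, ∑ i, ν (i, j) = μ j) (f : ι₂ → ℝ) :
    ∑ p, ν p * f p.2 = ∑ j, μ j * f j := by
  simp only [Fintype.sum_prod_type_right, ← Finset.sum_mul, hν]

theorem memStabOn_of_mem_stabL {W : Type*} [Fintype W] [DecidableEq W] {H : SimpleGraph W}
    {W₁ : Finset W} {ℒ ℒ' : Set (Finset W)} (hℒ : ℒ ⊆ ℒ') (hW₁ : ∀ L ∈ ℒ, L ⊆ W₁)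
    {x : W → ℝ} (hx : x ∈ stabL H ℒ') : MemStabOn H W₁ ℒ x := by
  let r : (W → ℝ) →ₗ[ℝ] ({w // w ∈ W₁} → ℝ) := LinearMap.funLeft ℝ ℝ Subtype.val
  have hrx := Set.mem_image_of_mem r hx
  rw [stabL, r.image_convexHull] at hrx
  refine convexHull_mono ?_ hrx
  rintro _ ⟨_, ⟨S, hS, hmeet, rfl⟩, rfl⟩
  -- `stabL` is stated with classical decidability instances
  replace hmeet : ∀ L ∈ ℒ', (S ∩ L).Nonempty := by convert hmeet
  refine ⟨S ∩ W₁, inter_subset_right,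
    fun a ha b hb => hS a (mem_inter.1 ha).1 b (mem_inter.1 hb).1, fun L hL => ?_, ?_⟩
  · obtain ⟨c, hc⟩ := hmeet L (hℒ hL)
    rw [mem_inter] at hc
    exact ⟨c, mem_inter.2 ⟨mem_inter.2 ⟨hc.1, hW₁ L hL hc.2⟩, hc.2⟩⟩
  · funext w
    simp [r, w.2]

theorem MemStabOn.exists_family {W : Type*} [Fintype W] [DecidableEq W] {H : SimpleGraph W}
    {W₁ : Finset W} {ℒ : Set (Finset W)} {x : W → ℝ} (h : MemStabOn H W₁ ℒ x) :
    ∃ (ι : Type) (_ : Fintype ι) (μ : ι → ℝ) (S : ι → Finset W), (∀ i, 0 ≤ μ i) ∧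
      ∑ i, μ i = 1 ∧ (∀ i, S i ⊆ W₁ ∧ IsStable H (S i) ∧ ∀ L ∈ ℒ, (S i ∩ L).Nonempty) ∧
      ∀ w ∈ W₁, ∑ i, μ i * (if w ∈ S i then 1 else 0) = x w := by
  obtain ⟨ι, _, μ, z, hμ₀, hμ₁, hz, hx⟩ := mem_convexHull_iff_exists_fintype.1 h
  choose S hS₁ hS₂ hS₃ hz using hz
  refine ⟨ι, inferInstance, μ, S, hμ₀, hμ₁, fun i => ⟨hS₁ i, hS₂ i, hS₃ i⟩, fun w hw => ?_⟩
  simpa [hz, Finset.sum_apply] using congrFun hx ⟨w, hw⟩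

section RecordGraph

omit [Fintype V] [DecidableEq V]

variable {G : SimpleGraph V} {U : Finset V}

@[simp]
theorem recordGraph_adj_inl_inl {a b : V} :
    (recordGraph G U).Adj (Sum.inl a) (Sum.inl b) ↔ G.Adj a b := by
  simp only [recordGraph, SimpleGraph.fromRel_adj, ne_eq, Sum.inl.injEq]
  exact ⟨fun ⟨_, h⟩ => h.elim id fun h => h.symm, fun h => ⟨G.ne_of_adj h, Or.inl h⟩⟩

@[simp]
theorem recordGraph_adj_inl_inr {a : V} {T : RecT G U} :
    (recordGraph G U).Adj (Sum.inl a) (Sum.inr T) ↔ a ∈ U ∧ a ∉ T.1 := by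
  simp [recordGraph]

@[simp]
theorem recordGraph_adj_inr_inr {T T' : RecT G U} :
    (recordGraph G U).Adj (Sum.inr T) (Sum.inr T') ↔ T ≠ T' := by
  simp [recordGraph]

end RecordGraph

section Records

variable {G : SimpleGraph V} {U : Finset V}

variable (G U) in
noncomputable def withRecords (A : Finset V) : Finset (V ⊕ RecT G U) :=
  A.image Sum.inl ∪ univ.image Sum.inr

@[simp]
theorem inl_mem_withRecords {A : Finset V} {v : V} :
    (Sum.inl v : V ⊕ RecT G U) ∈ withRecords G U A ↔ v ∈ A := by
  simp [withRecords]

@[simp]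
theorem inr_mem_withRecords {A : Finset V} {T : RecT G U} : Sum.inr T ∈ withRecords G U A := by
  simp [withRecords]

theorem subset_withRecords_of_mem_recordCliques {A : Finset V} (hUA : U ⊆ A)
    {L : Finset (V ⊕ RecT G U)} (hL : L ∈ recordCliques G U) : L ⊆ withRecords G U A := by
  rcases hL with rfl | ⟨v, hv, rfl⟩
  · exact subset_union_right
  · intro c hc
    rcases mem_insert.1 hc with rfl | hc
    · simpa using hUA hv
    · obtain ⟨T, -, rfl⟩ := mem_image.1 hc
      exact inr_mem_withRecords

def HasRecord (S : Finset (V ⊕ RecT G U)) (T : RecT G U) : Prop :=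
  (∀ T', Sum.inr T' ∈ S ↔ T' = T) ∧ ∀ v ∈ U, (Sum.inl v ∈ S ↔ v ∈ T.1)

theorem exists_hasRecord {S : Finset (V ⊕ RecT G U)} (hS : IsStable (recordGraph G U) S)
    (hmeet : ∀ L ∈ recordCliques G U, (S ∩ L).Nonempty) : ∃ T, HasRecord S T := by
  obtain ⟨_, hT⟩ := hmeet _ (Or.inl rfl)
  obtain ⟨hTS, hT⟩ := mem_inter.1 hT
  obtain ⟨T, -, rfl⟩ := mem_image.1 hT
  have hrec : ∀ T', Sum.inr T' ∈ S ↔ T' = T := fun T' =>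
    ⟨fun h => not_not.1 fun hne => hS _ h _ hTS (recordGraph_adj_inr_inr.2 hne), fun h => h ▸ hTS⟩
  refine ⟨T, hrec, fun v hv => ⟨fun hvS => ?_, fun hvT => ?_⟩⟩
  · exact not_not.1 fun hvT => hS _ hvS _ hTS (recordGraph_adj_inl_inr.2 ⟨hv, hvT⟩)
  · -- the clique `{v} ∪ {r_T' : v ∉ T'}` is met, and not by a record since `v ∈ T`
    obtain ⟨c, hc⟩ := hmeet _ (Or.inr ⟨v, hv, rfl⟩)
    obtain ⟨hcS, hc⟩ := mem_inter.1 hc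
    rcases mem_insert.1 hc with rfl | hc
    · exact hcS
    · obtain ⟨T', hT', rfl⟩ := mem_image.1 hc
      exact absurd ((hrec T').1 hcS ▸ hvT) (mem_filter.1 hT').2

namespace HasRecord

variable {S₁ S₂ : Finset (V ⊕ RecT G U)} {T : RecT G U}

theorem mem_iff_mem (h₁ : HasRecord S₁ T) (h₂ : HasRecord S₂ T) {c : V ⊕ RecT G U}
    (hc : c ∈ withRecords G U U) : c ∈ S₁ ↔ c ∈ S₂ := by
  rcases c with v | T'
  · have hv : v ∈ U := inl_mem_withRecords.1 hc
    rw [h₁.2 v hv, h₂.2 v hv]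
  · rw [h₁.1, h₂.1]

variable {V₁ V₂ : Finset V}

theorem mem_union_iff_left (h₁ : HasRecord S₁ T) (h₂ : HasRecord S₂ T) (hV : Disjoint V₁ V₂)
    (hS₂ : S₂ ⊆ withRecords G U (V₂ ∪ U)) {c : V ⊕ RecT G U}
    (hc : c ∈ withRecords G U (V₁ ∪ U)) : c ∈ S₁ ∪ S₂ ↔ c ∈ S₁ := by
  refine ⟨fun h => (mem_union.1 h).elim id fun hc₂ => (h₁.mem_iff_mem h₂ ?_).2 hc₂,
    mem_union_left _⟩
  rcases c with v | T'
  · have hv₁ := inl_mem_withRecords.1 hc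
    have hv₂ := inl_mem_withRecords.1 (hS₂ hc₂)
    simp only [mem_union] at hv₁ hv₂
    exact inl_mem_withRecords.2 (hv₁.elim (fun hv => hv₂.resolve_left (disjoint_left.1 hV hv)) id)
  · exact inr_mem_withRecords

theorem isStable_union (h₁ : HasRecord S₁ T) (h₂ : HasRecord S₂ T)
    (hS₁ : IsStable (recordGraph G U) S₁) (hS₂ : IsStable (recordGraph G U) S₂)
    (hsub₁ : S₁ ⊆ withRecords G U (V₁ ∪ U)) (hsub₂ : S₂ ⊆ withRecords G U (V₂ ∪ U))
    (hnonadj : ∀ a ∈ V₁, ∀ b ∈ V₂, ¬ G.Adj a b) :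
    IsStable (recordGraph G U) (S₁ ∪ S₂) := by
  have hcross : ∀ c ∈ S₁, ∀ d ∈ S₂, ¬ (recordGraph G U).Adj c d := by
    intro c hc d hd
    by_cases hcU : c ∈ withRecords G U U
    · exact hS₂ c ((h₁.mem_iff_mem h₂ hcU).1 hc) d hd
    by_cases hdU : d ∈ withRecords G U U
    · exact hS₁ c hc d ((h₁.mem_iff_mem h₂ hdU).2 hd)
    rcases c with u | _
    · rcases d with v | _
      · rw [inl_mem_withRecords] at hcU hdU
        have hu := (mem_union.1 (inl_mem_withRecords.1 (hsub₁ hc))).resolve_right hcU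
        have hv := (mem_union.1 (inl_mem_withRecords.1 (hsub₂ hd))).resolve_right hdU
        rw [recordGraph_adj_inl_inl]
        exact hnonadj u hu v hv
      · exact absurd inr_mem_withRecords hdU
    · exact absurd inr_mem_withRecords hcU
  intro c hc d hd
  rcases mem_union.1 hc with hc | hc <;> rcases mem_union.1 hd with hd | hd
  · exact hS₁ c hc d hd
  · exact hcross c hc d hd
  · exact fun h => hcross d hd c hc h.symm
  · exact hS₂ c hc d hd

end HasRecord

theorem sum_filter_hasRecord_eq {ι : Type*} [Fintype ι] {μ : ι → ℝ}
    {S : ι → Finset (V ⊕ RecT G U)} {τ : ι → RecT G U} (hτ : ∀ i, HasRecord (S i) (τ i))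
    {x : V ⊕ RecT G U → ℝ} {A : Finset V}
    (hx : ∀ w ∈ withRecords G U A, ∑ i, μ i * (if w ∈ S i then 1 else 0) = x w)
    (T : RecT G U) : ∑ i with τ i = T, μ i = x (Sum.inr T) := by
  rw [← hx _ inr_mem_withRecords, sum_filter]
  refine sum_congr rfl fun i _ => ?_
  simp [(hτ i).1 T, eq_comm]

theorem mem_withRecords_of_notMem {V₁ V₂ : Finset V} (hpart : V₁ ∪ U ∪ V₂ = univ)
    {c : V ⊕ RecT G U} (hc : c ∉ withRecords G U (V₁ ∪ U)) : c ∈ withRecords G U (V₂ ∪ U) := by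
  rcases c with v | T
  · have hv : v ∈ V₁ ∪ U ∪ V₂ := hpart ▸ mem_univ v
    rw [inl_mem_withRecords] at hc ⊢
    exact mem_union_left _ ((mem_union.1 hv).resolve_left hc)
  · exact inr_mem_withRecords

theorem mem_stabL_of_memStabOn {V₁ V₂ : Finset V} (hpart : V₁ ∪ U ∪ V₂ = univ)
    (hV : Disjoint V₁ V₂) (hnonadj : ∀ a ∈ V₁, ∀ b ∈ V₂, ¬ G.Adj a b)
    {ℒ₁ ℒ₂ : Set (Finset (V ⊕ RecT G U))} {x : V ⊕ RecT G U → ℝ}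
    (h₁ : MemStabOn (recordGraph G U) (withRecords G U (V₁ ∪ U)) (ℒ₁ ∪ recordCliques G U) x)
    (h₂ : MemStabOn (recordGraph G U) (withRecords G U (V₂ ∪ U)) (ℒ₂ ∪ recordCliques G U) x) :
    x ∈ stabL (recordGraph G U) (ℒ₁ ∪ ℒ₂ ∪ recordCliques G U) := by
  obtain ⟨ι₁, _, μ₁, S₁, hμ₁, hsum₁, hS₁, hx₁⟩ := h₁.exists_family
  obtain ⟨ι₂, _, μ₂, S₂, hμ₂, -, hS₂, hx₂⟩ := h₂.exists_family
  choose τ₁ hτ₁ using fun i => exists_hasRecord (hS₁ i).2.1 fun L hL => (hS₁ i).2.2 L (Or.inr hL)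
  choose τ₂ hτ₂ using fun j => exists_hasRecord (hS₂ j).2.1 fun L hL => (hS₂ j).2.2 L (Or.inr hL)
  obtain ⟨ν, hν₀, hντ, hν₁, hν₂⟩ := exists_coupling τ₁ τ₂ hμ₁ hμ₂ fun T =>
    (sum_filter_hasRecord_eq hτ₁ hx₁ T).trans (sum_filter_hasRecord_eq hτ₂ hx₂ T).symm
  refine mem_convexHull_of_sum_smul_eq ν (fun p w => if w ∈ S₁ p.1 ∪ S₂ p.2 then 1 else 0)
    hν₀ ?_ (fun p hp => ?_) ?_
  · simpa [Fintype.sum_prod_type, hν₁] using hsum₁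
  · have hrec₂ : HasRecord (S₂ p.2) (τ₁ p.1) := hντ p hp ▸ hτ₂ p.2
    have hmeet : ∀ L ∈ ℒ₁ ∪ ℒ₂ ∪ recordCliques G U, ((S₁ p.1 ∪ S₂ p.2) ∩ L).Nonempty := by
      rintro L ((hL | hL) | hL)
      · exact ((hS₁ p.1).2.2 L (Or.inl hL)).mono (inter_subset_inter_right subset_union_left)
      · exact ((hS₂ p.2).2.2 L (Or.inl hL)).mono (inter_subset_inter_right subset_union_right)
      · exact ((hS₁ p.1).2.2 L (Or.inr hL)).mono (inter_subset_inter_right subset_union_left)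
    refine ⟨S₁ p.1 ∪ S₂ p.2, (hτ₁ p.1).isStable_union hrec₂ (hS₁ _).2.1 (hS₂ _).2.1 (hS₁ _).1
      (hS₂ _).1 hnonadj, by convert hmeet, by convert rfl⟩
  · funext w
    simp only [Finset.sum_apply, Pi.smul_apply, smul_eq_mul]
    by_cases hw : w ∈ withRecords G U (V₁ ∪ U)
    · rw [← hx₁ w hw, ← sum_mul_fst_of_sum_snd_eq hν₁]
      refine sum_congr rfl fun p _ => ?_
      rcases eq_or_ne (ν p) 0 with hp | hp
      · rw [hp, zero_mul, zero_mul]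
      · simp only [(hτ₁ p.1).mem_union_iff_left (hντ p hp ▸ hτ₂ p.2) hV (hS₂ p.2).1 hw]
    · rw [← hx₂ w (mem_withRecords_of_notMem hpart hw), ← sum_mul_snd_of_sum_fst_eq hν₂]
      refine sum_congr rfl fun p _ => ?_
      have hw₁ : w ∉ S₁ p.1 := fun h => hw ((hS₁ p.1).1 h)
      simp [hw₁]

theorem memStabOn_withRecords_of_mem_stabL {A : Finset V} (hUA : U ⊆ A)
    {ℒ ℒ' : Set (Finset (V ⊕ RecT G U))} (hℒ : ℒ ⊆ ℒ') (hA : ∀ L ∈ ℒ, L ⊆ A.image Sum.inl)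
    {x : V ⊕ RecT G U → ℝ} (hx : x ∈ stabL (recordGraph G U) (ℒ' ∪ recordCliques G U)) :
    MemStabOn (recordGraph G U) (withRecords G U A) (ℒ ∪ recordCliques G U) x := by
  refine memStabOn_of_mem_stabL (Set.union_subset_union_left _ hℒ) (fun L hL => ?_) hx
  rcases hL with hL | hL
  · exact (hA L hL).trans subset_union_left
  · exact subset_withRecords_of_mem_recordCliques hUA hL

end Records

theorem stmt12_general (G : SimpleGraph V) (V₁ U V₂ : Finset V)
    (hpart : V₁ ∪ U ∪ V₂ = Finset.univ)
    (hd₂ : Disjoint V₁ V₂)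
    (hnonadj : ∀ a ∈ V₁, ∀ b ∈ V₂, ¬ G.Adj a b)
    (ℒ₁ ℒ₂ : Set (Finset (V ⊕ RecT G U)))
    (hℒ₁ : ∀ L ∈ ℒ₁, L ⊆ (V₁ ∪ U).image Sum.inl ∧ (recordGraph G U).IsClique (↑L : Set (V ⊕ RecT G U)))
    (hℒ₂ : ∀ L ∈ ℒ₂, L ⊆ (V₂ ∪ U).image Sum.inl ∧ (recordGraph G U).IsClique (↑L : Set (V ⊕ RecT G U)))
    (x : (V ⊕ RecT G U) → ℝ) :
    x ∈ stabL (recordGraph G U) (ℒ₁ ∪ ℒ₂ ∪ recordCliques G U) ↔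
      (MemStabOn (recordGraph G U)
        ((V₁ ∪ U).image Sum.inl ∪ (Finset.univ : Finset (RecT G U)).image Sum.inr)
        (ℒ₁ ∪ recordCliques G U) x ∧
       MemStabOn (recordGraph G U)
        ((V₂ ∪ U).image Sum.inl ∪ (Finset.univ : Finset (RecT G U)).image Sum.inr)
        (ℒ₂ ∪ recordCliques G U) x) := by
  refine ⟨fun hx => ⟨?_, ?_⟩, fun ⟨h₁, h₂⟩ => mem_stabL_of_memStabOn hpart hd₂ hnonadj h₁ h₂⟩
  · exact memStabOn_withRecords_of_mem_stabL subset_union_right Set.subset_union_left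
      (fun L hL => (hℒ₁ L hL).1) hx
  · exact memStabOn_withRecords_of_mem_stabL subset_union_right Set.subset_union_right
      (fun L hL => (hℒ₂ L hL).1) hx

/-- for a node cutset separation `(V₁, U, V₂)` and collections of
cliques `ℒ₁` of `G₁ = G[V₁ ∪ U]`, `ℒ₂` of `G₂ = G[V₂ ∪ U]`, a vector lies in
`STAB(G(U), ℒ₁ ∪ ℒ₂ ∪ ℒ(U))` iff its restrictions to `G₁(U)` and `G₂(U)` lie in
`STAB(G₁(U), ℒ₁ ∪ ℒ(U))` and `STAB(G₂(U), ℒ₂ ∪ ℒ(U))` respectively. -/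
theorem stmt12 (G : SimpleGraph V) (V₁ U V₂ : Finset V)
    (hpart : V₁ ∪ U ∪ V₂ = Finset.univ)
    (hd₁ : Disjoint V₁ U) (hd₂ : Disjoint V₁ V₂) (hd₃ : Disjoint U V₂)
    (hnonadj : ∀ a ∈ V₁, ∀ b ∈ V₂, ¬ G.Adj a b) (hV₂ : V₂.Nonempty)
    (ℒ₁ ℒ₂ : Set (Finset (V ⊕ RecT G U)))
    (hℒ₁ : ∀ L ∈ ℒ₁, L ⊆ (V₁ ∪ U).image Sum.inl ∧ (recordGraph G U).IsClique (↑L : Set (V ⊕ RecT G U)))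
    (hℒ₂ : ∀ L ∈ ℒ₂, L ⊆ (V₂ ∪ U).image Sum.inl ∧ (recordGraph G U).IsClique (↑L : Set (V ⊕ RecT G U)))
    (x : (V ⊕ RecT G U) → ℝ) :
    x ∈ stabL (recordGraph G U) (ℒ₁ ∪ ℒ₂ ∪ recordCliques G U) ↔
      (MemStabOn (recordGraph G U)
        ((V₁ ∪ U).image Sum.inl ∪ (Finset.univ : Finset (RecT G U)).image Sum.inr)
        (ℒ₁ ∪ recordCliques G U) x ∧
       MemStabOn (recordGraph G U)
        ((V₂ ∪ U).image Sum.inl ∪ (Finset.univ : Finset (RecT G U)).image Sum.inr)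
        (ℒ₂ ∪ recordCliques G U) x) :=
  stmt12_general G V₁ U V₂ hpart hd₂ hnonadj ℒ₁ ℒ₂ hℒ₁ hℒ₂ x
end

section
/- Let G⁺ be the clique lift of U ⊆ V from a graph G = (V,E): delete U, add a clique with one vertex s_S for each stable set S of G[U], and join s_S to every vertex of N_G(S)\U. Define p : ℝ^{(V\U)∪Ũ} → ℝ^V by p_v(x) = Σ_{S ∋ v} x_{s_S} for v ∈ U and p_v(x) = x_v otherwise. Then STAB(G) = p(STAB(G⁺)). -/
open Finset
open scoped Classical

variable {V : Type*} [Fintype V] [DecidableEq V]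

/-- The stable subsets of `U` (indices of the lifted clique, including `∅`). -/
def StabU (G : SimpleGraph V) (U : Finset V) : Type _ :=
  {S : Finset V // S ⊆ U ∧ IsStable G S}

noncomputable instance (G : SimpleGraph V) (U : Finset V) : Fintype (StabU G U) := by
  unfold StabU; infer_instance

/-- The clique lift `G⁺` of `U` from `G`: delete `U`, add a clique with one vertex
`s_S` per stable `S ⊆ U`, and join `s_S` to every vertex of `N_G(S) \ U`. -/
noncomputable def cliqueLift (G : SimpleGraph V) (U : Finset V) :
    SimpleGraph ({v // v ∉ U} ⊕ StabU G U) :=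
  SimpleGraph.fromRel (fun x y =>
    match x, y with
    | Sum.inl a, Sum.inl b => G.Adj a.1 b.1
    | Sum.inl a, Sum.inr S => ∃ s ∈ S.1, G.Adj a.1 s
    | Sum.inr S, Sum.inl a => ∃ s ∈ S.1, G.Adj a.1 s
    | Sum.inr _, Sum.inr _ => True)

/-- The projection `p` of the clique lift coordinates back to `ℝ^V`. -/
noncomputable def liftProj (G : SimpleGraph V) (U : Finset V)
    (x : ({v // v ∉ U} ⊕ StabU G U) → ℝ) : V → ℝ :=
  fun v =>
    if h : v ∈ U then
      ∑ S ∈ (Finset.univ : Finset (StabU G U)).filter (fun S => v ∈ S.1),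
        x (Sum.inr S)
    else x (Sum.inl ⟨v, h⟩)

/-!
The projection `p` is linear, so it maps `STAB(G⁺)`, the convex hull of the characteristic
vectors of stable sets of `G⁺`, onto the convex hull of their images. Since `Ũ` is a clique, a
stable set of `G⁺` is `T ∪ {s_S}`, or `T` alone (read `S = ∅`), with `T ⊆ V \ U` stable and
anticomplete to `S`, and `p` sends its characteristic vector to that of the stable set `S ∪ T`
of `G`. Conversely, a stable set `T` of `G` arises in this way from `(T \ U) ∪ {s_{T ∩ U}}`.
-/

theorem IsStable.mono {W : Type*} {G : SimpleGraph W} {S T : Finset W} (hT : IsStable G T)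
    (hST : S ⊆ T) : IsStable G S :=
  fun a ha b hb => hT a (hST ha) b (hST hb)

noncomputable def charVec {W : Type*} (S : Finset W) : W → ℝ :=
  fun w => if w ∈ S then 1 else 0

theorem stab_eq_convexHull {W : Type*} [Fintype W] (G : SimpleGraph W) :
    stab G = convexHull ℝ (charVec '' {S | IsStable G S}) := by
  simp only [stab, Set.image, Set.mem_ofPred_eq, eq_comm]
  rfl

open Sum

section CliqueLift

variable {W : Type*} {G : SimpleGraph W} {U : Finset W}

@[simp]
theorem cliqueLift_adj_inl_inl {a b : {v // v ∉ U}} :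
    (cliqueLift G U).Adj (inl a) (inl b) ↔ G.Adj a b := by
  simp only [cliqueLift, SimpleGraph.fromRel_adj, ne_eq, inl.injEq, G.adj_comm b, or_self]
  exact and_iff_right_of_imp fun h e => h.ne (congrArg Subtype.val e)

@[simp]
theorem cliqueLift_adj_inl_inr {a : {v // v ∉ U}} {S : StabU G U} :
    (cliqueLift G U).Adj (inl a) (inr S) ↔ ∃ s ∈ S.1, G.Adj a s := by
  simp [cliqueLift, SimpleGraph.fromRel_adj]

@[simp]
theorem cliqueLift_adj_inr_inr {S S' : StabU G U} :
    (cliqueLift G U).Adj (inr S) (inr S') ↔ S ≠ S' := by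
  simp [cliqueLift, SimpleGraph.fromRel_adj]

@[simp]
theorem cliqueLift_adj_inr_inl {a : {v // v ∉ U}} {S : StabU G U} :
    (cliqueLift G U).Adj (inr S) (inl a) ↔ ∃ s ∈ S.1, G.Adj a s := by
  rw [SimpleGraph.adj_comm, cliqueLift_adj_inl_inr]

theorem IsStable.subsingleton_toRight {T : Finset ({v // v ∉ U} ⊕ StabU G U)}
    (hT : IsStable (cliqueLift G U) T) : (T.toRight : Set (StabU G U)).Subsingleton :=
  fun _ hS _ hS' => by_contra fun h =>
    hT _ (mem_toRight.1 hS) _ (mem_toRight.1 hS') (cliqueLift_adj_inr_inr.2 h)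

/-- The vertex set `S ∪ T` of `G` corresponding to the vertex set `T ∪ {s_S}` of `G⁺`. -/
noncomputable def unliftSet (T : Finset ({v // v ∉ U} ⊕ StabU G U)) : Finset W :=
  T.toLeft.map (Function.Embedding.subtype _) ∪ T.toRight.biUnion fun S : StabU G U => S.1

theorem mem_unliftSet {T : Finset ({v // v ∉ U} ⊕ StabU G U)} {v : W} :
    v ∈ unliftSet T ↔
      (∃ h : v ∉ U, inl ⟨v, h⟩ ∈ T) ∨ ∃ S : StabU G U, inr S ∈ T ∧ v ∈ S.1 := by
  simp [unliftSet]

theorem mem_unliftSet_of_mem {T : Finset ({v // v ∉ U} ⊕ StabU G U)} {v : W} (hv : v ∈ U) :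
    v ∈ unliftSet T ↔ ∃ S : StabU G U, inr S ∈ T ∧ v ∈ S.1 := by
  simp [mem_unliftSet, hv]

theorem mem_unliftSet_of_notMem {T : Finset ({v // v ∉ U} ⊕ StabU G U)} {v : W} (hv : v ∉ U) :
    v ∈ unliftSet T ↔ inl ⟨v, hv⟩ ∈ T := by
  simp only [mem_unliftSet, hv, not_false_eq_true, exists_true_left, or_iff_left_iff_imp]
  rintro ⟨S, -, hvS⟩
  exact absurd (S.2.1 hvS) hv

theorem IsStable.isStable_unliftSet {T : Finset ({v // v ∉ U} ⊕ StabU G U)}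
    (hT : IsStable (cliqueLift G U) T) : IsStable G (unliftSet T) := by
  intro u hu w hw hadj
  rcases mem_unliftSet.1 hu with ⟨_, huT⟩ | ⟨S, hST, huS⟩ <;>
    rcases mem_unliftSet.1 hw with ⟨_, hwT⟩ | ⟨S', hS'T, hwS'⟩
  · exact hT _ huT _ hwT (cliqueLift_adj_inl_inl.2 hadj)
  · exact hT _ huT _ hS'T (cliqueLift_adj_inl_inr.2 ⟨w, hwS', hadj⟩)
  · exact hT _ hwT _ hST (cliqueLift_adj_inl_inr.2 ⟨u, huS, hadj.symm⟩)
  · obtain rfl : S = S' :=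
      hT.subsingleton_toRight (mem_coe.2 (mem_toRight.2 hST)) (mem_coe.2 (mem_toRight.2 hS'T))
    exact S.2.2 u huS w hwS' hadj

theorem IsStable.exists_unliftSet_eq {T : Finset W} (hT : IsStable G T) :
    ∃ T' : Finset ({v // v ∉ U} ⊕ StabU G U),
      IsStable (cliqueLift G U) T' ∧ unliftSet T' = T := by
  refine ⟨(T.subtype (· ∉ U)).disjSum
    ({⟨T ∩ U, inter_subset_right, hT.mono inter_subset_left⟩} : Finset (StabU G U)), ?_, ?_⟩
  · rintro (a | S) ha (b | S') hb hadj <;> simp at ha hb hadj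
    · exact hT _ ha _ hb hadj
    · obtain rfl := mem_singleton.1 hb
      obtain ⟨s, hs, hadj⟩ := hadj
      exact hT _ ha s (mem_inter.1 hs).1 hadj
    · obtain rfl := mem_singleton.1 ha
      obtain ⟨s, hs, hadj⟩ := hadj
      exact hT _ hb s (mem_inter.1 hs).1 hadj
    · exact hadj ((mem_singleton.1 ha).trans (mem_singleton.1 hb).symm)
  · ext v
    rw [mem_unliftSet]
    constructor
    · rintro (⟨_, hv⟩ | ⟨S, hS, hvS⟩)
      · exact mem_subtype.1 (inl_mem_disjSum.1 hv)
      · obtain rfl := mem_singleton.1 (inr_mem_disjSum.1 hS)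
        exact (mem_inter.1 hvS).1
    · intro hv
      by_cases hU : v ∈ U
      · exact Or.inr ⟨_, inr_mem_disjSum.2 (mem_singleton_self _), mem_inter.2 ⟨hv, hU⟩⟩
      · exact Or.inl ⟨hU, inl_mem_disjSum.2 (mem_subtype.2 hv)⟩

end CliqueLift

section LiftProj

variable {G : SimpleGraph V} {U : Finset V}

theorem isLinearMap_liftProj : IsLinearMap ℝ (liftProj G U) where
  map_add x y := by
    ext v
    simp only [liftProj, Pi.add_apply]
    split_ifs <;> simp [sum_add_distrib]
  map_smul c x := by
    ext v
    simp only [liftProj, Pi.smul_apply]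
    split_ifs <;> simp [mul_sum]

theorem IsStable.liftProj_charVec {T : Finset ({v // v ∉ U} ⊕ StabU G U)}
    (hT : IsStable (cliqueLift G U) T) :
    liftProj G U (charVec T) = charVec (unliftSet T) := by
  ext v
  by_cases hv : v ∈ U
  · simp only [liftProj, dif_pos hv]
    by_cases hS : ∃ S : StabU G U, inr S ∈ T ∧ v ∈ S.1
    · obtain ⟨S, hST, hvS⟩ := hS
      rw [charVec, if_pos ((mem_unliftSet_of_mem hv).2 ⟨S, hST, hvS⟩)]
      refine (sum_eq_single_of_mem S (by simpa using hvS) fun S' _ hne => ?_).trans (if_pos hST)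
      exact if_neg fun h => hne (hT.subsingleton_toRight (by simpa using h) (by simpa using hST))
    · rw [charVec, if_neg (by rwa [mem_unliftSet_of_mem hv])]
      exact sum_eq_zero fun S hvS => if_neg fun h => hS ⟨S, h, (mem_filter.1 hvS).2⟩
  · simp only [liftProj, dif_neg hv, charVec, mem_unliftSet_of_notMem hv]
    -- the two sides differ only in their `Decidable` instances
    congr

end LiftProj

/-- `STAB(G)` is the image of `STAB(G⁺)` under the projection `p`. -/
theorem stmt16 (G : SimpleGraph V) (U : Finset V) :
    stab G = liftProj G U '' stab (cliqueLift G U) := by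
  rw [stab_eq_convexHull, stab_eq_convexHull, isLinearMap_liftProj.image_convexHull,
    Set.image_image]
  congr 1
  ext x
  constructor
  · rintro ⟨T, hT, rfl⟩
    obtain ⟨T', hT', rfl⟩ := hT.exists_unliftSet_eq (U := U)
    exact ⟨T', hT', hT'.liftProj_charVec⟩
  · rintro ⟨T', hT', rfl⟩
    exact ⟨unliftSet T', hT'.isStable_unliftSet, hT'.liftProj_charVec.symm⟩
end
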